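/- Let q ≥ 2 be an integer, let N, r, t be non-negative integers, and let θ be a real number. Then the number of integers n with 0 ≤ n < N such that e(θ S_q(n+r)) · conj(e(θ S_q(n))) ≠ e(θ S_{q,t}(n+r)) · conj(e(θ S_{q,t}(n))) is at most N·r/q^t + r. -/

import Mathlib

noncomputable section

/-- `e x = exp(2 π i x)`. -/
def e (x : ℝ) : ℂ := Complex.exp (2 * Real.pi * Complex.I * x)

/-- Sum of digits of `n` in base `q`. -/
def Sq (q n : ℕ) : ℕ := (Nat.digits q n).sum

/-- Truncated sum of digits: `S_{q,t}(n) = S_q(n mod q^t)`. -/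
def Sqt (q t n : ℕ) : ℕ := Sq q (n % q ^ t)

/-!
If `n mod q^t + r < q^t`, adding `r` to `n` produces no carry into the digits of weight `≥ q^t`,
so `n` and `n + r` share those digits and `S_q(n + r) - S_q(n) = S_{q,t}(n + r) - S_{q,t}(n)`.
Hence every `n` counted on the left has its residue `n mod q^t` in the window `[q^t - r, q^t)`;
the interval `[0, N)` meets at most `⌊N / q^t⌋ + 1` blocks of `q^t` consecutive integers, each
contributing at most `r` such `n`.
-/

open Finset

lemma e_mul_conj_e (a b : ℝ) : e a * starRingEnd ℂ (e b) = e (a - b) := by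
  rw [e, e, ← Complex.exp_conj, ← Complex.exp_add]
  congr 1
  simp only [map_mul, Complex.conj_ofReal, Complex.conj_I, map_ofNat, Complex.ofReal_sub]
  ring

lemma Sq_add_pow_mul {q t b : ℕ} (hq : 1 < q) (hb : b < q ^ t) (a : ℕ) :
    Sq q (b + q ^ t * a) = Sq q b + Sq q a := by
  rcases Nat.eq_zero_or_pos a with rfl | ha
  · simp [Sq]
  have hlen := (Nat.digits_length_le_iff hq b).2 hb
  have hdigits := Nat.digits_append_zeroes_append_digits
    (k := t - (Nat.digits q b).length) (n := b) hq ha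
  rw [Nat.add_sub_cancel' hlen] at hdigits
  simp [Sq, ← hdigits, List.sum_replicate]

lemma Sq_eq_Sqt_add_Sq_div {q : ℕ} (hq : 1 < q) (t n : ℕ) :
    Sq q n = Sqt q t n + Sq q (n / q ^ t) := by
  conv_lhs => rw [← Nat.mod_add_div n (q ^ t)]
  exact Sq_add_pow_mul hq (Nat.mod_lt n (by positivity)) _

lemma Sq_add_sub_Sq_eq_of_mod_add_lt {q t n r : ℕ} (hq : 1 < q) (h : n % q ^ t + r < q ^ t) :
    (Sq q (n + r) : ℤ) - Sq q n = (Sqt q t (n + r) : ℤ) - Sqt q t n := by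
  have hr : r < q ^ t := (Nat.le_add_left r _).trans_lt h
  have hdiv : (n + r) / q ^ t = n / q ^ t := by
    rw [Nat.add_div_eq_of_add_mod_lt (by rwa [Nat.mod_eq_of_lt hr]), Nat.div_eq_of_lt hr, add_zero]
  rw [Sq_eq_Sqt_add_Sq_div hq t n, Sq_eq_Sqt_add_Sq_div hq t (n + r), hdiv]
  push_cast
  ring

lemma card_filter_le_mod_add_le {m : ℕ} (hm : 0 < m) (N r : ℕ) :
    #{n ∈ range N | m ≤ n % m + r} ≤ (N / m + 1) * r := by
  calc #{n ∈ range N | m ≤ n % m + r}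
      ≤ #(range (N / m + 1) ×ˢ Ico (m - r) m) := by
        refine card_le_card_of_injOn (fun n => (n / m, n % m)) ?_ ?_
        · intro n hn
          simp only [coe_filter, mem_range, Set.mem_ofPred_eq] at hn
          simp only [coe_product, coe_range, coe_Ico, Set.mem_prod, Set.mem_Iio, Set.mem_Ico]
          exact ⟨Nat.lt_succ_of_le (Nat.div_le_div_right hn.1.le), by omega, Nat.mod_lt n hm⟩
        · intro a _ b _ hab
          simp only [Prod.mk.injEq] at hab
          rw [← Nat.div_add_mod a m, ← Nat.div_add_mod b m, hab.1, hab.2]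
    _ ≤ (N / m + 1) * r := by
        rw [card_product, card_range, Nat.card_Ico]
        exact Nat.mul_le_mul_left _ (by omega)

lemma natCast_div_add_one_mul_le (N m r : ℕ) :
    (((N / m + 1) * r : ℕ) : ℝ) ≤ N * r / m + r := by
  have := Nat.cast_div_le (α := ℝ) (m := N) (n := m)
  push_cast
  rw [add_one_mul, mul_div_right_comm]
  gcongr

/-- Truncation lemma for the base-`q` sum of digits. -/
theorem truncation_base_q (q : ℕ) (hq : 2 ≤ q) (N r t : ℕ) (θ : ℝ) :
    (((Finset.range N).filter fun n =>
        e (θ * Sq q (n + r)) * (starRingEnd ℂ) (e (θ * Sq q n)) ≠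
          e (θ * Sqt q t (n + r)) * (starRingEnd ℂ) (e (θ * Sqt q t n))).card : ℝ) ≤
      (N : ℝ) * r / q ^ t + r := by
  have hcarry : ((Finset.range N).filter fun n =>
        e (θ * Sq q (n + r)) * (starRingEnd ℂ) (e (θ * Sq q n)) ≠
          e (θ * Sqt q t (n + r)) * (starRingEnd ℂ) (e (θ * Sqt q t n))) ⊆
      {n ∈ range N | q ^ t ≤ n % q ^ t + r} := by
    refine monotone_filter_right _ fun n _ hne => ?_
    by_contra! h
    have hdiff := congrArg (fun k : ℤ => θ * (k : ℝ)) (Sq_add_sub_Sq_eq_of_mod_add_lt hq h)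
    push_cast at hdiff
    rw [e_mul_conj_e, e_mul_conj_e, ← mul_sub, ← mul_sub, hdiff] at hne
    exact hne rfl
  calc _ ≤ (#{n ∈ range N | q ^ t ≤ n % q ^ t + r} : ℝ) := mod_cast card_le_card hcarry
    _ ≤ (((N / q ^ t + 1) * r : ℕ) : ℝ) :=
        mod_cast card_filter_le_mod_add_le (by positivity) N r
    _ ≤ (N : ℝ) * r / q ^ t + r := mod_cast natCast_div_add_one_mul_le N (q ^ t) r

end
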